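/- (Jordan–Hölder) Any two Γ-composition series of a commutative refinement Γ-monoid T are equivalent: there is a bijection between the sets of simple quotient monoids under which corresponding quotients are Γ-isomorphic. -/

import Mathlib

open Pointwise

namespace JH

variable {Γ : Type*} {T : Type*} [AddCommMonoid T]

/-- `x ρ_H y` iff `(x+H) ∩ (y+H) ≠ ∅`. -/
def rho (H : Set T) (x y : T) : Prop := ∃ h₁ ∈ H, ∃ h₂ ∈ H, x + h₁ = y + h₂

/-- The congruence on `T` induced by a submonoid `I`. -/
def subCon (I : AddSubmonoid T) : AddCon T where
  r := rho (I : Set T)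
  iseqv := by
    constructor
    · exact fun x => ⟨0, I.zero_mem, 0, I.zero_mem, rfl⟩
    · rintro x y ⟨h₁, m₁, h₂, m₂, e⟩; exact ⟨h₂, m₂, h₁, m₁, e.symm⟩
    · rintro x y z ⟨h₁, m₁, h₂, m₂, e₁⟩ ⟨k₁, n₁, k₂, n₂, e₂⟩
      refine ⟨h₁ + k₁, I.add_mem m₁ n₁, k₂ + h₂, I.add_mem n₂ m₂, ?_⟩
      calc x + (h₁ + k₁) = (x + h₁) + k₁ := (add_assoc _ _ _).symm
        _ = (y + h₂) + k₁ := by rw [e₁]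
        _ = (y + k₁) + h₂ := add_right_comm _ _ _
        _ = (z + k₂) + h₂ := by rw [e₂]
        _ = z + (k₂ + h₂) := add_assoc _ _ _
  add' := by
    rintro w x y z ⟨h₁, m₁, h₂, m₂, e₁⟩ ⟨k₁, n₁, k₂, n₂, e₂⟩
    refine ⟨h₁ + k₁, I.add_mem m₁ n₁, h₂ + k₂, I.add_mem m₂ n₂, ?_⟩
    calc w + y + (h₁ + k₁) = (w + h₁) + (y + k₁) := add_add_add_comm _ _ _ _
      _ = (x + h₂) + (z + k₂) := by rw [e₁, e₂]
      _ = x + z + (h₂ + k₂) := (add_add_add_comm _ _ _ _).symm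

/-- The quotient monoid `T/I`. -/
abbrev QuotM (I : AddSubmonoid T) : Type _ := (subCon I).Quotient

variable [CommGroup Γ] [DistribMulAction Γ T]

/-- A `Γ`-order-ideal of a `Γ`-monoid: `α•a + β•b ∈ I ↔ a ∈ I ∧ b ∈ I`. -/
def IsOrdIdeal (Γ : Type*) {T : Type*} [CommGroup Γ] [AddCommMonoid T]
    [DistribMulAction Γ T] (I : Set T) : Prop :=
  (0 : T) ∈ I ∧ ∀ (α β : Γ) (a b : T), α • a + β • b ∈ I ↔ a ∈ I ∧ b ∈ I

theorem IsOrdIdeal.add_mem {I : Set T} (h : IsOrdIdeal Γ I) {a b : T}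
    (ha : a ∈ I) (hb : b ∈ I) : a + b ∈ I := by
  have := (h.2 1 1 a b).mpr ⟨ha, hb⟩
  simpa using this

/-- A `Γ`-order-ideal as an additive submonoid. -/
def IsOrdIdeal.asSubmonoid {I : Set T} (h : IsOrdIdeal Γ I) : AddSubmonoid T where
  carrier := I
  zero_mem' := h.1
  add_mem' := fun ha hb => h.add_mem ha hb

theorem IsOrdIdeal.smul_mem {I : Set T} (h : IsOrdIdeal Γ I) (α : Γ) {x : T}
    (hx : x ∈ I) : α • x ∈ I := by
  have := (h.2 α 1 x 0).mpr ⟨hx, h.1⟩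
  simpa using this

/-- The induced scalar action on the quotient. -/
def quotSMulFun {I : Set T} (h : IsOrdIdeal Γ I) (α : Γ) :
    QuotM h.asSubmonoid → QuotM h.asSubmonoid :=
  Quotient.map' (fun x => α • x) (by
    rintro x y ⟨h₁, m₁, h₂, m₂, e⟩
    exact ⟨α • h₁, h.smul_mem α m₁, α • h₂, h.smul_mem α m₂, by
      rw [← smul_add, ← smul_add, e]⟩)

/-- The induced `Γ`-action on the quotient monoid `T/I`. -/
def quotAction {I : Set T} (h : IsOrdIdeal Γ I) :
    DistribMulAction Γ (QuotM h.asSubmonoid) where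
  smul := quotSMulFun h
  one_smul q := by
    refine Quotient.inductionOn' q (fun x => ?_)
    show Quotient.mk'' ((1 : Γ) • x) = Quotient.mk'' x
    rw [one_smul]
  mul_smul α β q := by
    refine Quotient.inductionOn' q (fun x => ?_)
    show Quotient.mk'' ((α * β) • x) = Quotient.mk'' (α • β • x)
    rw [mul_smul]
  smul_zero α := by
    show Quotient.mk'' (α • (0 : T)) = Quotient.mk'' (0 : T)
    rw [smul_zero]
  smul_add α q r := by
    refine Quotient.inductionOn₂' q r (fun x y => ?_)
    show Quotient.mk'' (α • (x + y)) = Quotient.mk'' (α • x + α • y)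
    rw [smul_add]

/-- The `Γ`-action on a `Γ`-order-ideal, viewed as a submonoid. -/
def subtypeAction {J : Set T} (hJ : IsOrdIdeal Γ J) :
    DistribMulAction Γ ↥hJ.asSubmonoid where
  smul α x := ⟨α • (x : T), hJ.smul_mem α x.2⟩
  one_smul x := Subtype.ext (one_smul Γ (x : T))
  mul_smul α β x := Subtype.ext (mul_smul α β (x : T))
  smul_zero α := Subtype.ext (smul_zero α)
  smul_add α x y := Subtype.ext (smul_add α (x : T) (y : T))

/-- The restriction of a set `I` to (the submonoid given by) an ideal `J`. -/
def restrictSet {J : Set T} (hJ : IsOrdIdeal Γ J) (I : Set T) :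
    Set ↥hJ.asSubmonoid := {x | (x : T) ∈ I}

theorem restrict_isOrdIdeal {I J : Set T} (hI : IsOrdIdeal Γ I) (hJ : IsOrdIdeal Γ J) :
    @IsOrdIdeal Γ ↥hJ.asSubmonoid _ _ (subtypeAction hJ) (restrictSet hJ I) := by
  refine ⟨hI.1, fun α β a b => ?_⟩
  exact hI.2 α β (a : T) (b : T)

/-- The quotient `Γ`-monoid `J/I` of two `Γ`-order-ideals. -/
abbrev QuotPair {I J : Set T} (hI : IsOrdIdeal Γ I) (hJ : IsOrdIdeal Γ J) : Type _ :=
  QuotM (@IsOrdIdeal.asSubmonoid Γ _ _ _ (subtypeAction hJ) _ (restrict_isOrdIdeal hI hJ))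

/-- The induced `Γ`-action on `J/I`. -/
def quotPairAction {I J : Set T} (hI : IsOrdIdeal Γ I) (hJ : IsOrdIdeal Γ J) :
    DistribMulAction Γ (QuotPair hI hJ) :=
  letI := subtypeAction hJ
  quotAction (restrict_isOrdIdeal hI hJ)

/-- A simple `Γ`-monoid: nontrivial with no `Γ`-order-ideals except `0` and itself. -/
def IsSimple (Γ : Type*) (M : Type*) [CommGroup Γ] [AddCommMonoid M]
    [DistribMulAction Γ M] : Prop :=
  (∃ x : M, x ≠ 0) ∧ ∀ I : Set M, IsOrdIdeal Γ I → I = {0} ∨ I = Set.univ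

/-- A refinement monoid. -/
def Refinement (T : Type*) [AddCommMonoid T] : Prop :=
  ∀ a b c d : T, a + b = c + d →
    ∃ e₁ e₂ e₃ e₄ : T, a = e₁ + e₂ ∧ b = e₃ + e₄ ∧ c = e₁ + e₃ ∧ d = e₂ + e₄

/-- `Γ`-equivariant monoid isomorphism. -/
def IsGammaIso (Γ : Type*) (M N : Type*) [CommGroup Γ] [AddCommMonoid M]
    [AddCommMonoid N] [DistribMulAction Γ M] [DistribMulAction Γ N] : Prop :=
  ∃ e : M ≃+ N, ∀ (α : Γ) (x : M), e (α • x) = α • (e x)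

/-- A `Γ`-composition series of a `Γ`-monoid. -/
structure CompSeries (Γ : Type*) (M : Type*) [CommGroup Γ] [AddCommMonoid M]
    [DistribMulAction Γ M] where
  n : ℕ
  I : ℕ → Set M
  ideal : ∀ i, i ≤ n → IsOrdIdeal Γ (I i)
  bot : I 0 = {0}
  top : I n = Set.univ
  strict : ∀ i, i < n → I i ⊂ I (i + 1)
  simple : ∀ i (h : i < n),
    @IsSimple Γ (QuotPair (ideal i h.le) (ideal (i + 1) h)) _ _
      (quotPairAction (ideal i h.le) (ideal (i + 1) h))

/-- `Γ`-Noetherian: every ascending chain of `Γ`-order-ideals stabilizes. -/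
def GammaNoetherian (Γ : Type*) (T : Type*) [CommGroup Γ] [AddCommMonoid T]
    [DistribMulAction Γ T] : Prop :=
  ∀ A : ℕ → Set T, (∀ i, IsOrdIdeal Γ (A i)) → (∀ i, A i ⊆ A (i + 1)) →
    ∃ n, ∀ i, n ≤ i → A i = A n

/-- `Γ`-Artinian: every descending chain of `Γ`-order-ideals stabilizes. -/
def GammaArtinian (Γ : Type*) (T : Type*) [CommGroup Γ] [AddCommMonoid T]
    [DistribMulAction Γ T] : Prop :=
  ∀ A : ℕ → Set T, (∀ i, IsOrdIdeal Γ (A i)) → (∀ i, A (i + 1) ⊆ A i) →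
    ∃ n, ∀ i, n ≤ i → A i = A n

/-- Partial sums `I 0 + ⋯ + I (t-1)` of a family of subsets, as submonoids. -/
def sumSeq (I : ℕ → Set T) : ℕ → AddSubmonoid T
  | 0 => ⊥
  | t + 1 => sumSeq I t ⊔ AddSubmonoid.closure (I t)

end JH

/-!
The `Γ`-order ideals of a refinement monoid form a distributive lattice, with `I ⊔ J = I + J`
and `I ⊓ J = I ∩ J`, and a composition series is a composition series of this lattice in the
sense of Mathlib: by the correspondence theorem, a simple quotient `J/I` means that `J` covers `I`.
Mathlib's Jordan–Hölder theorem for modular lattices matches the steps of two such series so that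
corresponding intervals are related by the equivalence relation generated by
`(I, I ⊔ J) ~ (I ⊓ J, J)`, and the second isomorphism theorem `J/(I ∩ J) ≅ (I + J)/I` turns this
relation into `Γ`-isomorphism of the quotients.
-/

namespace JH

variable {Γ : Type*} {T : Type*} [AddCommMonoid T] [CommGroup Γ] [DistribMulAction Γ T]

attribute [local instance] quotPairAction

theorem IsOrdIdeal.add_mem_iff {I : Set T} (h : IsOrdIdeal Γ I) {a b : T} :
    a + b ∈ I ↔ a ∈ I ∧ b ∈ I := by
  simpa using h.2 1 1 a b

theorem isOrdIdeal_of_add_mem_iff {I : Set T} (h0 : (0 : T) ∈ I)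
    (hadd : ∀ a b : T, a + b ∈ I ↔ a ∈ I ∧ b ∈ I) (hsmul : ∀ (α : Γ) (a : T), a ∈ I → α • a ∈ I) :
    IsOrdIdeal Γ I := by
  have smul_mem_iff (α : Γ) (a : T) : α • a ∈ I ↔ a ∈ I :=
    ⟨fun h => by simpa using hsmul α⁻¹ _ h, hsmul α a⟩
  exact ⟨h0, fun α β a b => by rw [hadd, smul_mem_iff, smul_mem_iff]⟩

theorem IsOrdIdeal.inter {I J : Set T} (hI : IsOrdIdeal Γ I) (hJ : IsOrdIdeal Γ J) :
    IsOrdIdeal Γ (I ∩ J) :=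
  ⟨⟨hI.1, hJ.1⟩, fun α β a b => by simp only [Set.mem_inter_iff, hI.2, hJ.2]; tauto⟩

/-- The refinement property is exactly what makes a sum of order ideals hereditary. -/
theorem IsOrdIdeal.add (hT : Refinement T) {I J : Set T} (hI : IsOrdIdeal Γ I)
    (hJ : IsOrdIdeal Γ J) : IsOrdIdeal Γ (I + J) := by
  refine isOrdIdeal_of_add_mem_iff ⟨0, hI.1, 0, hJ.1, add_zero 0⟩ (fun a b => ⟨?_, ?_⟩) ?_
  · rintro ⟨i, hi, j, hj, hab⟩
    obtain ⟨e₁, e₂, e₃, e₄, rfl, rfl, rfl, rfl⟩ := hT i j a b hab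
    exact ⟨⟨e₁, (hI.add_mem_iff.mp hi).1, e₃, (hJ.add_mem_iff.mp hj).1, rfl⟩,
      ⟨e₂, (hI.add_mem_iff.mp hi).2, e₄, (hJ.add_mem_iff.mp hj).2, rfl⟩⟩
  · rintro ⟨⟨i, hi, j, hj, rfl⟩, ⟨i', hi', j', hj', rfl⟩⟩
    exact ⟨i + i', hI.add_mem hi hi', j + j', hJ.add_mem hj hj', add_add_add_comm _ _ _ _⟩
  · rintro α _ ⟨i, hi, j, hj, rfl⟩
    exact ⟨α • i, hI.smul_mem α hi, α • j, hJ.smul_mem α hj, (smul_add α i j).symm⟩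

variable (Γ T) in
structure OrdIdeal where
  carrier : Set T
  isOrdIdeal : IsOrdIdeal Γ carrier

namespace OrdIdeal

instance : SetLike (OrdIdeal Γ T) T where
  coe := carrier
  coe_injective := by rintro ⟨I, _⟩ ⟨J, _⟩ rfl; rfl

instance : PartialOrder (OrdIdeal Γ T) := .ofSetLike (OrdIdeal Γ T) T

instance [Fact (Refinement T)] : Lattice (OrdIdeal Γ T) where
  __ := (inferInstance : PartialOrder (OrdIdeal Γ T))
  sup I J := ⟨I + J, I.isOrdIdeal.add Fact.out J.isOrdIdeal⟩
  le_sup_left I J x hx := ⟨x, hx, 0, J.isOrdIdeal.1, add_zero x⟩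
  le_sup_right I J x hx := ⟨0, I.isOrdIdeal.1, x, hx, zero_add x⟩
  sup_le I J K hIK hJK := by
    rintro _ ⟨i, hi, j, hj, rfl⟩
    exact K.isOrdIdeal.add_mem (hIK hi) (hJK hj)
  inf I J := ⟨I ∩ J, I.isOrdIdeal.inter J.isOrdIdeal⟩
  inf_le_left _ _ := Set.inter_subset_left
  inf_le_right _ _ := Set.inter_subset_right
  le_inf _ _ _ := Set.subset_inter

/-- An element of `I ∩ (J + K)` splits as `j + k` with both summands again in `I`. -/
instance [Fact (Refinement T)] : DistribLattice (OrdIdeal Γ T) :=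
  .ofInfSupLe fun I _ _ => by
    rintro _ ⟨hx, ⟨j, hj, k, hk, rfl⟩⟩
    obtain ⟨hjI, hkI⟩ := I.isOrdIdeal.add_mem_iff.mp hx
    exact ⟨j, ⟨hjI, hj⟩, k, ⟨hkI, hk⟩, rfl⟩

end OrdIdeal

theorem rho_mono {H H' : Set T} (h : H ⊆ H') {x y : T} (hxy : rho H x y) : rho H' x y :=
  let ⟨h₁, m₁, h₂, m₂, e⟩ := hxy
  ⟨h₁, h m₁, h₂, h m₂, e⟩

section QuotPair

variable {I J : Set T} (hI : IsOrdIdeal Γ I) (hJ : IsOrdIdeal Γ J)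

def mkq (x : T) (hx : x ∈ J) : QuotPair hI hJ := Quotient.mk'' ⟨x, hx⟩

theorem mkq_surjective (q : QuotPair hI hJ) : ∃ x, ∃ hx : x ∈ J, mkq hI hJ x hx = q :=
  Quotient.inductionOn' q fun x => ⟨x, x.2, rfl⟩

theorem mkq_eq_mkq_iff {x y : T} (hx : x ∈ J) (hy : y ∈ J) :
    mkq hI hJ x hx = mkq hI hJ y hy ↔ rho (I ∩ J) x y := by
  refine Quotient.eq''.trans ⟨?_, ?_⟩
  · rintro ⟨⟨h₁, hJ₁⟩, hI₁, ⟨h₂, hJ₂⟩, hI₂, e⟩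
    exact ⟨h₁, ⟨hI₁, hJ₁⟩, h₂, ⟨hI₂, hJ₂⟩, congrArg Subtype.val e⟩
  · rintro ⟨h₁, ⟨hI₁, hJ₁⟩, h₂, ⟨hI₂, hJ₂⟩, e⟩
    exact ⟨⟨h₁, hJ₁⟩, hI₁, ⟨h₂, hJ₂⟩, hI₂, Subtype.ext e⟩

theorem mkq_zero : mkq hI hJ 0 hJ.1 = 0 := rfl

theorem mkq_add {x y : T} (hx : x ∈ J) (hy : y ∈ J) :
    mkq hI hJ x hx + mkq hI hJ y hy = mkq hI hJ (x + y) (hJ.add_mem hx hy) := rfl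

theorem mkq_smul (α : Γ) {x : T} (hx : x ∈ J) :
    α • mkq hI hJ x hx = mkq hI hJ (α • x) (hJ.smul_mem α hx) := rfl

end QuotPair

/-- Correspondence theorem: `L` descends to an order ideal of `P/K`. -/
theorem eq_or_eq_of_isSimple {K P L : Set T} (hK : IsOrdIdeal Γ K) (hP : IsOrdIdeal Γ P)
    (hL : IsOrdIdeal Γ L) (hs : IsSimple Γ (QuotPair hK hP)) (hKL : K ⊆ L) (hLP : L ⊆ P) :
    L = K ∨ L = P := by
  set L' : Set (QuotPair hK hP) := {q | ∃ x, ∃ hx : x ∈ P, x ∈ L ∧ mkq hK hP x hx = q}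
  have mem_L' {x : T} (hx : x ∈ P) : mkq hK hP x hx ∈ L' ↔ x ∈ L := by
    refine ⟨fun ⟨y, hy, hyL, e⟩ => ?_, fun h => ⟨x, hx, h, rfl⟩⟩
    obtain ⟨h₁, ⟨hK₁, -⟩, h₂, ⟨hK₂, -⟩, e⟩ := (mkq_eq_mkq_iff hK hP hy hx).mp e
    exact (hL.add_mem_iff.mp (e ▸ hL.add_mem hyL (hKL hK₁))).1
  have hL' : IsOrdIdeal Γ L' := by
    refine isOrdIdeal_of_add_mem_iff ((mem_L' hP.1).mpr hL.1) (fun q r => ?_) (fun α q => ?_)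
    · obtain ⟨x, hx, rfl⟩ := mkq_surjective hK hP q
      obtain ⟨y, hy, rfl⟩ := mkq_surjective hK hP r
      rw [mkq_add, mem_L', mem_L', mem_L', hL.add_mem_iff]
    · obtain ⟨x, hx, rfl⟩ := mkq_surjective hK hP q
      rw [mkq_smul, mem_L', mem_L']
      exact hL.smul_mem α
  rcases hs.2 L' hL' with h | h
  · refine Or.inl (hKL.antisymm' fun x hxL => ?_)
    have := (mem_L' (hLP hxL)).mpr hxL
    rw [h, Set.mem_singleton_iff, ← mkq_zero hK hP, mkq_eq_mkq_iff] at this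
    obtain ⟨h₁, -, h₂, ⟨hK₂, -⟩, e⟩ := this
    have : x + h₁ ∈ K := by rwa [e, zero_add]
    exact (hK.add_mem_iff.mp this).1
  · exact Or.inr (hLP.antisymm fun x hx => (mem_L' hx).mp (h ▸ trivial))

section IsGammaIso

variable {M N P : Type*} [AddCommMonoid M] [AddCommMonoid N] [AddCommMonoid P]
  [DistribMulAction Γ M] [DistribMulAction Γ N] [DistribMulAction Γ P]

theorem IsGammaIso.refl : IsGammaIso Γ M M := ⟨AddEquiv.refl M, fun _ _ => rfl⟩

theorem IsGammaIso.symm (h : IsGammaIso Γ M N) : IsGammaIso Γ N M := by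
  obtain ⟨e, he⟩ := h
  exact ⟨e.symm, fun α y => e.injective (by rw [he, e.apply_symm_apply, e.apply_symm_apply])⟩

theorem IsGammaIso.trans (h₁ : IsGammaIso Γ M N) (h₂ : IsGammaIso Γ N P) : IsGammaIso Γ M P := by
  obtain ⟨e₁, he₁⟩ := h₁
  obtain ⟨e₂, he₂⟩ := h₂
  exact ⟨e₁.trans e₂, fun α x => by simp only [AddEquiv.trans_apply, he₁, he₂]⟩

end IsGammaIso

/-- `QuotPair hI hJ` is `J` modulo `I ∩ J`, hence the intersections in the hypotheses. -/
theorem isGammaIso_of_subset {I J I' J' : Set T} (hI : IsOrdIdeal Γ I) (hJ : IsOrdIdeal Γ J)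
    (hI' : IsOrdIdeal Γ I') (hJ' : IsOrdIdeal Γ J') (hJJ' : J ⊆ J') (hII' : I ∩ J ⊆ I')
    (surj : ∀ z ∈ J', ∃ w ∈ J, rho (I' ∩ J') z w)
    (inj : ∀ x ∈ J, ∀ y ∈ J, rho (I' ∩ J') x y → rho (I ∩ J) x y) :
    IsGammaIso Γ (QuotPair hI hJ) (QuotPair hI' hJ') := by
  let f : QuotPair hI hJ → QuotPair hI' hJ' :=
    Quotient.lift (fun x : hJ.asSubmonoid => mkq hI' hJ' x (hJJ' x.2)) fun x y hxy =>
      (mkq_eq_mkq_iff _ _ _ _).mpr <|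
        rho_mono (Set.subset_inter hII' (Set.inter_subset_right.trans hJJ')) <|
          (mkq_eq_mkq_iff hI hJ x.2 y.2).mp (Quotient.sound hxy)
  have f_mkq (x : T) (hx : x ∈ J) : f (mkq hI hJ x hx) = mkq hI' hJ' x (hJJ' hx) := rfl
  have f_bij : Function.Bijective f := by
    refine ⟨fun q r hqr => ?_, fun q => ?_⟩
    · obtain ⟨x, hx, rfl⟩ := mkq_surjective hI hJ q
      obtain ⟨y, hy, rfl⟩ := mkq_surjective hI hJ r
      rw [f_mkq, f_mkq, mkq_eq_mkq_iff] at hqr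
      exact (mkq_eq_mkq_iff hI hJ hx hy).mpr (inj x hx y hy hqr)
    · obtain ⟨z, hz, rfl⟩ := mkq_surjective hI' hJ' q
      obtain ⟨w, hw, hzw⟩ := surj z hz
      exact ⟨mkq hI hJ w hw, ((mkq_eq_mkq_iff _ _ _ _).mpr hzw).symm⟩
  refine ⟨{ Equiv.ofBijective f f_bij with
    map_add' := fun q r => Quotient.inductionOn₂' q r fun _ _ => rfl }, fun α q => ?_⟩
  exact Quotient.inductionOn' q fun _ => rfl

/-- Second isomorphism theorem `J/(I ∩ J) ≅ (I + J)/I`; injectivity is where refinement enters. -/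
theorem isGammaIso_inter_add (hT : Refinement T) {I J : Set T} (hI : IsOrdIdeal Γ I)
    (hJ : IsOrdIdeal Γ J) :
    IsGammaIso Γ (QuotPair (hI.inter hJ) hJ) (QuotPair hI (hI.add hT hJ)) := by
  refine isGammaIso_of_subset _ _ _ _ (fun y hy => ⟨0, hI.1, y, hy, zero_add y⟩)
    (fun z hz => hz.1.1) ?_ ?_
  · rintro _ ⟨i, hi, j, hj, rfl⟩
    exact ⟨j, hj, 0, ⟨hI.1, (hI.add hT hJ).1⟩, i, ⟨hi, i, hi, 0, hJ.1, add_zero i⟩, by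
      rw [add_zero, add_comm]⟩
  · rintro x hx y hy ⟨h₁, ⟨hI₁, -⟩, h₂, ⟨hI₂, -⟩, e⟩
    obtain ⟨e₁, e₂, e₃, e₄, rfl, rfl, rfl, rfl⟩ := hT x h₁ y h₂ e
    refine ⟨e₃, ?_, e₂, ?_, by rw [add_right_comm]⟩
    · exact ⟨⟨(hI.add_mem_iff.mp hI₁).1, (hJ.add_mem_iff.mp hy).2⟩, (hJ.add_mem_iff.mp hy).2⟩
    · exact ⟨⟨(hI.add_mem_iff.mp hI₂).1, (hJ.add_mem_iff.mp hx).2⟩, (hJ.add_mem_iff.mp hx).2⟩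

namespace OrdIdeal

theorem covBy_of_isSimple {K P : OrdIdeal Γ T} (hKP : K ≤ P)
    (hs : IsSimple Γ (QuotPair K.isOrdIdeal P.isOrdIdeal)) : K ⋖ P := by
  have eq_or_eq (L : OrdIdeal Γ T) (hKL : K ≤ L) (hLP : L ≤ P) : L = K ∨ L = P :=
    (eq_or_eq_of_isSimple K.isOrdIdeal P.isOrdIdeal L.isOrdIdeal hs hKL hLP).imp
    (fun h => SetLike.coe_injective h) (fun h => SetLike.coe_injective h)
  refine ⟨hKP.lt_of_ne fun hKP' => ?_, fun L hKL hLP => ?_⟩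
  · obtain ⟨q, hq⟩ := hs.1
    obtain ⟨x, hx, rfl⟩ := mkq_surjective _ _ q
    refine hq ((mkq_eq_mkq_iff _ _ _ _).mpr ⟨0, ⟨K.isOrdIdeal.1, P.isOrdIdeal.1⟩, x, ?_, ?_⟩)
    · exact ⟨hKP' ▸ hx, hx⟩
    · rw [add_zero, zero_add]
  · rcases eq_or_eq L hKL.le hLP.le with rfl | rfl
    exacts [hKL.ne rfl, hLP.ne rfl]

theorem isGammaIso_of_iso [Fact (Refinement T)] {p q : OrdIdeal Γ T × OrdIdeal Γ T}
    (h : JordanHolderLattice.Iso p q) :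
    IsGammaIso Γ (QuotPair p.1.isOrdIdeal p.2.isOrdIdeal)
      (QuotPair q.1.isOrdIdeal q.2.isOrdIdeal) :=
  JordanHolderLattice.Iso.rel
    (fun p q : OrdIdeal Γ T × OrdIdeal Γ T => IsGammaIso Γ
      (QuotPair p.1.isOrdIdeal p.2.isOrdIdeal) (QuotPair q.1.isOrdIdeal q.2.isOrdIdeal))
    IsGammaIso.refl IsGammaIso.symm IsGammaIso.trans
    (fun {x y} _ => (isGammaIso_inter_add Fact.out x.isOrdIdeal y.isOrdIdeal).symm) h

end OrdIdeal

def CompSeries.toCompositionSeries [Fact (Refinement T)] (S : CompSeries Γ T) :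
    CompositionSeries (OrdIdeal Γ T) where
  length := S.n
  toFun i := ⟨S.I i, S.ideal i (Nat.lt_succ_iff.mp i.2)⟩
  step i := OrdIdeal.covBy_of_isSimple (S.strict i i.2).subset (S.simple i i.2)

theorem CompSeries.coe_head [Fact (Refinement T)] (S : CompSeries Γ T) :
    (S.toCompositionSeries.head : Set T) = {0} :=
  S.bot

theorem CompSeries.coe_last [Fact (Refinement T)] (S : CompSeries Γ T) :
    (S.toCompositionSeries.last : Set T) = Set.univ :=
  S.top

end JH

open JH in
/-- Jordan–Hölder: any two Γ-composition series of a commutative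
refinement Γ-monoid are equivalent: there is a bijection between the simple
quotients making corresponding quotients Γ-isomorphic. -/
theorem stmt15 {Γ T : Type*} [CommGroup Γ] [AddCommMonoid T] [DistribMulAction Γ T]
    (hT : Refinement T) (S₁ S₂ : CompSeries Γ T) :
    ∃ σ : Fin S₁.n ≃ Fin S₂.n, ∀ i : Fin S₁.n,
      @IsGammaIso Γ
        (QuotPair (S₁.ideal ↑i i.2.le) (S₁.ideal (↑i + 1) i.2))
        (QuotPair (S₂.ideal ↑(σ i) (σ i).2.le) (S₂.ideal (↑(σ i) + 1) (σ i).2))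
        _ _ _
        (quotPairAction (S₁.ideal ↑i i.2.le) (S₁.ideal (↑i + 1) i.2))
        (quotPairAction (S₂.ideal ↑(σ i) (σ i).2.le) (S₂.ideal (↑(σ i) + 1) (σ i).2))
    := by
  have : Fact (Refinement T) := ⟨hT⟩
  obtain ⟨σ, hσ⟩ := CompositionSeries.jordan_holder S₁.toCompositionSeries S₂.toCompositionSeries
    (SetLike.coe_injective (S₁.coe_head.trans S₂.coe_head.symm))
    (SetLike.coe_injective (S₁.coe_last.trans S₂.coe_last.symm))
  exact ⟨σ, fun i => OrdIdeal.isGammaIso_of_iso (hσ i)⟩
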